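/- For integers t ≥ 1 and k with 0 ≤ k ≤ t, one has p(2t+2, k, t) = b(t,k) · c(t,k), where b(t,k) = 2^k · C(t,k) / C(2t,k) and c(t,k) = (2t − k + 2)(2t + 1 − k) / ((2t − 2k + 2)(2t + 1)). -/

import Mathlib

/-- Integer binomial coefficient: `intChoose a b` is zero unless `0 ≤ b ≤ a`. -/
def intChoose (a b : ℤ) : ℤ :=
  if 0 ≤ b ∧ b ≤ a then (a.toNat.choose b.toNat : ℤ) else 0

/-- `p(n,k,t) = (∑_{i=0}^t (-1)^i C(t,i) C(n-1-2i, k-2i)) / C(n-1,k)`. -/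
def pFun (n k t : ℕ) : ℚ :=
  (∑ i ∈ Finset.range (t + 1),
      (-1) ^ i * (intChoose t i : ℚ) * (intChoose ((n : ℤ) - 1 - 2 * i) ((k : ℤ) - 2 * i) : ℚ))
    / ((n - 1).choose k : ℚ)

/-!
The numerator of `p(2t+2, k, t)` is the coefficient of `X^k` in
`∑ᵢ (-1)^i C(t,i) X^(2i) (X+1)^(2t+1-2i) = (X+1) ((X+1)^2 - X^2)^t = (X+1)(2X+1)^t`,
namely `2^k C(t,k) + 2^(k-1) C(t,k-1) = 2^k C(t,k) (2t-k+2)/(2t-2k+2)`.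
The denominator is `C(2t+1,k) = C(2t,k) (2t+1)/(2t+1-k)`.
-/

open Polynomial Finset

lemma intChoose_natCast (a b : ℕ) : intChoose a b = a.choose b := by
  unfold intChoose
  split_ifs with h
  · simp
  · rw [Nat.choose_eq_zero_of_lt (by omega), Nat.cast_zero]

lemma intChoose_of_neg (a : ℤ) {b : ℤ} (hb : b < 0) : intChoose a b = 0 :=
  if_neg fun h => (h.1.trans_lt hb).false

lemma sum_neg_one_pow_mul_choose_mul_X_add_one_pow {R : Type*} [CommRing R] (t : ℕ) :
    ∑ i ∈ range (t + 1),
        C ((-1 : R) ^ i * t.choose i) * ((X + 1) ^ (2 * (t - i) + 1) * X ^ (2 * i))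
      = (X + 1) * (2 * X + 1) ^ t := by
  rw [show (2 * X + 1 : R[X]) = -X ^ 2 + (X + 1) ^ 2 by ring, add_pow, mul_sum]
  refine sum_congr rfl fun i _ => ?_
  rw [pow_succ, pow_mul]
  simp only [map_mul, map_pow, map_neg, map_one, map_natCast]
  ring

section CommSemiring

variable {R : Type*} [CommSemiring R]

lemma coeff_two_mul_X_add_one_pow (t k : ℕ) :
    ((2 * X + 1 : R[X]) ^ t).coeff k = 2 ^ k * t.choose k := by
  have h : (2 * X + 1 : R[X]) ^ t = ((X + 1) ^ t).comp (C 2 * X) := by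
    simp [pow_comp, ← map_ofNat C 2]
  rw [h, comp_C_mul_X_coeff, coeff_X_add_one_pow, mul_comm]

lemma coeff_X_add_one_mul_two_mul_X_add_one_pow_zero (t : ℕ) :
    ((X + 1) * (2 * X + 1 : R[X]) ^ t).coeff 0 = 1 := by
  simp [mul_coeff_zero, coeff_two_mul_X_add_one_pow]

lemma coeff_X_add_one_mul_two_mul_X_add_one_pow_succ (t k : ℕ) :
    ((X + 1) * (2 * X + 1 : R[X]) ^ t).coeff (k + 1)
      = (2 ^ (k + 1) * t.choose (k + 1) + 2 ^ k * t.choose k : R) := by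
  rw [add_mul, one_mul, coeff_add, coeff_X_mul, coeff_two_mul_X_add_one_pow,
    coeff_two_mul_X_add_one_pow, add_comm]

end CommSemiring

lemma coeff_X_add_one_mul_two_mul_X_add_one_pow {t k : ℕ} (hk : k ≤ t) :
    ((X + 1) * (2 * X + 1 : ℚ[X]) ^ t).coeff k
      = (2 ^ k * t.choose k * ((2 * t - k + 2) / (2 * t - 2 * k + 2)) : ℚ) := by
  have hpos : (0 : ℚ) < 2 * t - 2 * k + 2 := by
    have : (k : ℚ) ≤ t := by exact_mod_cast hk
    linarith
  rw [← mul_div_assoc, eq_div_iff hpos.ne']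
  rcases k with _ | j
  · rw [coeff_X_add_one_mul_two_mul_X_add_one_pow_zero]
    simp
  · have hchoose : (t.choose (j + 1) : ℚ) * (j + 1) = t.choose j * (t - j) := by
      have h := congrArg (Nat.cast : ℕ → ℚ) (Nat.choose_succ_right_eq t j)
      push_cast [Nat.cast_sub (by omega : j ≤ t)] at h
      exact h
    rw [coeff_X_add_one_mul_two_mul_X_add_one_pow_succ]
    push_cast
    linear_combination -2 * (2 : ℚ) ^ j * hchoose

lemma sum_intChoose_eq_coeff (t k : ℕ) :
    ∑ i ∈ range (t + 1), (-1) ^ i * (intChoose t i : ℚ) *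
        (intChoose (((2 * t + 2 : ℕ) : ℤ) - 1 - 2 * i) ((k : ℤ) - 2 * i) : ℚ)
      = ((X + 1) * (2 * X + 1 : ℚ[X]) ^ t).coeff k := by
  rw [← sum_neg_one_pow_mul_choose_mul_X_add_one_pow, finsetSum_coeff]
  refine sum_congr rfl fun i hi => ?_
  have hit : i ≤ t := Nat.lt_succ_iff.mp (mem_range.mp hi)
  rw [coeff_C_mul, coeff_mul_X_pow', coeff_X_add_one_pow, intChoose_natCast]
  split_ifs with hik
  · have ha : ((2 * t + 2 : ℕ) : ℤ) - 1 - 2 * i = ((2 * (t - i) + 1 : ℕ) : ℤ) := by omega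
    have hb : (k : ℤ) - 2 * i = ((k - 2 * i : ℕ) : ℤ) := by omega
    rw [ha, hb, intChoose_natCast, Int.cast_natCast, Int.cast_natCast]
  · rw [intChoose_of_neg _ (by omega), Int.cast_zero, mul_zero, mul_zero]

lemma cast_choose_two_mul_add_one {t k : ℕ} (hk : k ≤ 2 * t) :
    ((2 * t + 1).choose k : ℚ) = (2 * t).choose k * (2 * t + 1) / (2 * t + 1 - k) := by
  have hpos : (0 : ℚ) < 2 * t + 1 - k := by
    have : (k : ℚ) ≤ 2 * t := by exact_mod_cast hk
    linarith
  have h := congrArg (Nat.cast : ℕ → ℚ) (Nat.choose_mul_succ_eq (2 * t) k)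
  push_cast [Nat.cast_sub (by omega : k ≤ 2 * t + 1)] at h
  rw [eq_div_iff hpos.ne', h]

theorem stmt_13_general (t k : ℕ) (hk : k ≤ t) :
    pFun (2 * t + 2) k t =
      (2 ^ k * (t.choose k : ℚ) / ((2 * t).choose k : ℚ)) *
        ((2 * (t : ℚ) - k + 2) * (2 * (t : ℚ) + 1 - k) /
          ((2 * (t : ℚ) - 2 * k + 2) * (2 * (t : ℚ) + 1))) := by
  have hkt : (k : ℚ) ≤ t := by exact_mod_cast hk
  have hC : ((2 * t).choose k : ℚ) ≠ 0 := Nat.cast_ne_zero.mpr (Nat.choose_pos (by omega)).ne'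
  have h1 : (2 * t + 1 - k : ℚ) ≠ 0 := by linarith
  have h2 : (2 * t + 1 : ℚ) ≠ 0 := by positivity
  unfold pFun
  rw [sum_intChoose_eq_coeff, coeff_X_add_one_mul_two_mul_X_add_one_pow hk,
    show 2 * t + 2 - 1 = 2 * t + 1 from rfl, cast_choose_two_mul_add_one (by omega)]
  field_simp

theorem stmt_13 (t k : ℕ) (ht : 1 ≤ t) (hk : k ≤ t) :
    pFun (2 * t + 2) k t =
      (2 ^ k * (t.choose k : ℚ) / ((2 * t).choose k : ℚ)) *
        ((2 * (t : ℚ) - k + 2) * (2 * (t : ℚ) + 1 - k) /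
          ((2 * (t : ℚ) - 2 * k + 2) * (2 * (t : ℚ) + 1))) :=
  stmt_13_general t k hk
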